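/- Let K be a field of characteristic p > 0, p ≥ 3, and let f = xᵖ + y^(p−1) ∈ K[[x,y]], g = (1+x)·f. Then f and g are contact equivalent (g = u·f with the unit u = 1+x), but μ(g) = p·(p−2) is finite while μ(f) is infinite. Hence the Milnor number is not a contact invariant in positive characteristic. -/

import Mathlib

open MvPowerSeries

/-- Formal partial derivative `∂f/∂xᵢ` of a multivariate formal power series. -/
noncomputable def pderiv {n : ℕ} {K : Type*} [Field K] (i : Fin n)
    (f : MvPowerSeries (Fin n) K) : MvPowerSeries (Fin n) K :=
  fun d => ((d i : K) + 1) * coeff (d + Finsupp.single i 1) f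

/-- The Jacobian ideal `j(f) = ⟨∂f/∂x₁, …, ∂f/∂xₙ⟩`. -/
noncomputable def jIdeal {n : ℕ} {K : Type*} [Field K]
    (f : MvPowerSeries (Fin n) K) : Ideal (MvPowerSeries (Fin n) K) :=
  Ideal.span (Set.range fun i => pderiv i f)

/-- The Tjurina ideal `tj(f) = ⟨f, ∂f/∂x₁, …, ∂f/∂xₙ⟩`. -/
noncomputable def tjIdeal {n : ℕ} {K : Type*} [Field K]
    (f : MvPowerSeries (Fin n) K) : Ideal (MvPowerSeries (Fin n) K) :=
  Ideal.span (insert f (Set.range fun i => pderiv i f))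

/-- The maximal ideal `⟨x₁, …, xₙ⟩` of `K[[x₁,…,xₙ]]`. -/
noncomputable def mIdeal (n : ℕ) (K : Type*) [Field K] : Ideal (MvPowerSeries (Fin n) K) :=
  Ideal.span (Set.range (X : Fin n → MvPowerSeries (Fin n) K))

/-- Contact equivalence: `g = u · φ(f)` for a unit `u` and a `K`-algebra automorphism `φ`. -/
def ContactEquiv {n : ℕ} {K : Type*} [Field K] (f g : MvPowerSeries (Fin n) K) : Prop :=
  ∃ (φ : MvPowerSeries (Fin n) K ≃ₐ[K] MvPowerSeries (Fin n) K)
    (u : MvPowerSeries (Fin n) K), IsUnit u ∧ g = u * φ f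

/-! In characteristic `p` we have `∂ₓ f = p xᵖ⁻¹ = 0` and `∂_y f = -y^(p-2)`, so `j(f) = ⟨y^(p-2)⟩`
and the powers of `x` stay linearly independent modulo `j(f)`. Multiplying by the unit `1 + x`
brings `f` itself in as a partial derivative: by the Leibniz rule `∂ₓ g = f` and
`∂_y g = -(1 + x) y^(p-2)`, hence `j(g) = ⟨xᵖ, y^(p-2)⟩`, and the coefficients of the monomials
`xⁱ yʲ` with `i < p`, `j < p - 2` identify `K[[x,y]]/j(g)` with `K^(p(p-2))`. -/

section

variable {K : Type*} [Field K]

theorem pderiv_eq_mvPowerSeries_pderiv {n : ℕ} (i : Fin n) (f : MvPowerSeries (Fin n) K) :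
    pderiv i f = MvPowerSeries.pderiv K i f := by
  ext d
  rw [MvPowerSeries.coeff_pderiv, mul_comm]
  rfl

theorem jIdeal_eq_span_pair (f : MvPowerSeries (Fin 2) K) :
    jIdeal f = Ideal.span {MvPowerSeries.pderiv K 0 f, MvPowerSeries.pderiv K 1 f} := by
  simp only [jIdeal, pderiv_eq_mvPowerSeries_pderiv, Fin.range_fin_succ, Set.range_unique]
  rfl

theorem isUnit_one_add_X {σ : Type*} (i : σ) : IsUnit (1 + X i : MvPowerSeries σ K) := by
  simp [MvPowerSeries.isUnit_iff_constantCoeff]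

theorem contactEquiv_mul_left_of_isUnit {n : ℕ} {u : MvPowerSeries (Fin n) K} (hu : IsUnit u)
    (f : MvPowerSeries (Fin n) K) : ContactEquiv f (u * f) :=
  ⟨AlgEquiv.refl, u, hu, rfl⟩

theorem not_finiteDimensional_quotient_of_le_span_X {σ : Type*} {i j : σ} (hij : i ≠ j)
    {I : Ideal (MvPowerSeries σ K)} (hI : I ≤ Ideal.span {X j}) :
    ¬ FiniteDimensional K (MvPowerSeries σ K ⧸ I) := by
  classical
  intro hfin
  let axis : MvPowerSeries σ K →ₗ[K] (ℕ → K) := LinearMap.pi fun n => coeff (Finsupp.single i n)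
  have hker : I.restrictScalars K ≤ LinearMap.ker axis := by
    intro f hf
    obtain ⟨h, rfl⟩ := Ideal.mem_span_singleton.mp (hI hf)
    ext n
    exact X_dvd_iff.mp (dvd_mul_right _ _) _ (by simp [hij])
  let axisQ := (I.restrictScalars K).liftQ axis hker ∘ₗ
    (Submodule.Quotient.restrictScalarsEquiv K I).symm.toLinearMap
  have hli : LinearIndependent K (axisQ ∘ fun n => Ideal.Quotient.mk I (X i ^ n)) := by
    convert Pi.linearIndependent_single_one ℕ K with n
    ext m
    change coeff (Finsupp.single i m) (X i ^ n : MvPowerSeries σ K) = _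
    simp [coeff_X_pow, Pi.single_apply, eq_comm, (Finsupp.single_injective i).eq_iff]
  have := hli.of_comp.finite
  exact not_finite ℕ

theorem single_zero_add_single_one (d : Fin 2 →₀ ℕ) :
    Finsupp.single 0 (d 0) + Finsupp.single 1 (d 1) = d := by
  ext k
  fin_cases k <;> simp

noncomputable def boxCoeff (a b : ℕ) : MvPowerSeries (Fin 2) K →ₗ[K] (Fin a × Fin b → K) :=
  LinearMap.pi fun q => coeff (Finsupp.single 0 (q.1 : ℕ) + Finsupp.single 1 (q.2 : ℕ))

@[simp]
theorem boxCoeff_apply (a b : ℕ) (f : MvPowerSeries (Fin 2) K) (q : Fin a × Fin b) :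
    boxCoeff a b f q = coeff (Finsupp.single 0 (q.1 : ℕ) + Finsupp.single 1 (q.2 : ℕ)) f :=
  rfl

theorem boxCoeff_surjective (a b : ℕ) : Function.Surjective (boxCoeff (K := K) a b) := by
  intro φ
  let f : MvPowerSeries (Fin 2) K := fun d =>
    if h : d 0 < a ∧ d 1 < b then φ (⟨d 0, h.1⟩, ⟨d 1, h.2⟩) else 0
  have coeff_f (d) : coeff d f =
      if h : d 0 < a ∧ d 1 < b then φ (⟨d 0, h.1⟩, ⟨d 1, h.2⟩) else 0 := rfl
  exact ⟨f, funext fun ⟨i, j⟩ => by simp [coeff_f]⟩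

theorem ker_boxCoeff (a b : ℕ) :
    LinearMap.ker (boxCoeff (K := K) a b) =
      (Ideal.span {(X 0 : MvPowerSeries (Fin 2) K) ^ a, X 1 ^ b}).restrictScalars K := by
  ext f
  simp only [LinearMap.mem_ker, Submodule.restrictScalars_mem]
  constructor
  · intro hf
    have hbox : ∀ d : Fin 2 →₀ ℕ, d 0 < a → d 1 < b → coeff d f = 0 := fun d h0 h1 => by
      simpa [single_zero_add_single_one] using congrFun hf (⟨d 0, h0⟩, ⟨d 1, h1⟩)
    let low : MvPowerSeries (Fin 2) K := fun d => if d 0 < a then coeff d f else 0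
    have coeff_low (d) : coeff d low = if d 0 < a then coeff d f else 0 := rfl
    obtain ⟨u, hu⟩ : X 0 ^ a ∣ f - low := X_pow_dvd_iff.mpr fun d hd => by
      simp [coeff_low, hd]
    obtain ⟨v, hv⟩ : X 1 ^ b ∣ low := X_pow_dvd_iff.mpr fun d hd => by
      by_cases h0 : d 0 < a
      · simp [coeff_low, h0, hbox d h0 hd]
      · simp [coeff_low, h0]
    exact Ideal.mem_span_pair.mpr ⟨u, v, by linear_combination -hu - hv⟩
  · intro hf
    obtain ⟨u, v, rfl⟩ := Ideal.mem_span_pair.mp hf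
    ext ⟨i, j⟩
    have hx : coeff (Finsupp.single 0 (i : ℕ) + Finsupp.single 1 (j : ℕ)) (u * X 0 ^ a) = 0 :=
      X_pow_dvd_iff.mp (dvd_mul_left _ _) _ (by simp)
    have hy : coeff (Finsupp.single 0 (i : ℕ) + Finsupp.single 1 (j : ℕ)) (v * X 1 ^ b) = 0 :=
      X_pow_dvd_iff.mp (dvd_mul_left _ _) _ (by simp)
    simp [hx, hy]

noncomputable def quotientSpanXPowEquiv (a b : ℕ) :
    (MvPowerSeries (Fin 2) K ⧸ Ideal.span {(X 0 : MvPowerSeries (Fin 2) K) ^ a, X 1 ^ b})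
      ≃ₗ[K] (Fin a × Fin b → K) :=
  (Submodule.Quotient.restrictScalarsEquiv K
      (Ideal.span {(X 0 : MvPowerSeries (Fin 2) K) ^ a, X 1 ^ b})).symm ≪≫ₗ
    Submodule.quotEquivOfEq _ _ (ker_boxCoeff a b).symm ≪≫ₗ
    LinearMap.quotKerEquivOfSurjective _ (boxCoeff_surjective a b)

theorem finrank_quotient_span_X_pow (a b : ℕ) :
    Module.finrank K
      (MvPowerSeries (Fin 2) K ⧸ Ideal.span {(X 0 : MvPowerSeries (Fin 2) K) ^ a, X 1 ^ b}) =
      a * b := by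
  simp [(quotientSpanXPowEquiv a b).finrank_eq]

section CharP

variable {p : ℕ} [CharP K p] {σ : Type*}

instance MvPowerSeries.charP : CharP (MvPowerSeries σ K) p :=
  charP_of_injective_algebraMap' K p

theorem pderiv_pow_char (i : σ) (g : MvPowerSeries σ K) :
    MvPowerSeries.pderiv K i (g ^ p) = 0 := by
  rw [MvPowerSeries.pderiv_pow, CharP.cast_eq_zero, zero_mul, zero_mul]

theorem pderiv_pow_char_sub_one (hp : 0 < p) (i : σ) (g : MvPowerSeries σ K) :
    MvPowerSeries.pderiv K i (g ^ (p - 1)) = -(g ^ (p - 2) * MvPowerSeries.pderiv K i g) := by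
  rw [MvPowerSeries.pderiv_pow, Nat.cast_sub hp, CharP.cast_eq_zero, Nat.sub_sub]
  ring

theorem pderiv_zero_X_pow_char_add_X_pow_char_sub_one (hp : 0 < p) :
    MvPowerSeries.pderiv K 0 (X 0 ^ p + X 1 ^ (p - 1) : MvPowerSeries (Fin 2) K) = 0 := by
  simp only [map_add, pderiv_pow_char, pderiv_pow_char_sub_one hp,
    MvPowerSeries.pderiv_X_of_ne (show (1 : Fin 2) ≠ 0 by decide)]
  simp

theorem pderiv_one_X_pow_char_add_X_pow_char_sub_one (hp : 0 < p) :
    MvPowerSeries.pderiv K 1 (X 0 ^ p + X 1 ^ (p - 1) : MvPowerSeries (Fin 2) K) =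
      -X 1 ^ (p - 2) := by
  simp only [map_add, pderiv_pow_char, pderiv_pow_char_sub_one hp, MvPowerSeries.pderiv_X_self]
  simp

theorem jIdeal_X_pow_char_add_X_pow_char_sub_one (hp : 0 < p) :
    jIdeal (X 0 ^ p + X 1 ^ (p - 1) : MvPowerSeries (Fin 2) K) = Ideal.span {X 1 ^ (p - 2)} := by
  rw [jIdeal_eq_span_pair, pderiv_zero_X_pow_char_add_X_pow_char_sub_one hp,
    pderiv_one_X_pow_char_add_X_pow_char_sub_one hp]
  simp

theorem jIdeal_one_add_X_mul_X_pow_char_add_X_pow_char_sub_one (hp : 2 ≤ p) :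
    jIdeal ((1 + X 0) * (X 0 ^ p + X 1 ^ (p - 1)) : MvPowerSeries (Fin 2) K) =
      Ideal.span {X 0 ^ p, X 1 ^ (p - 2)} := by
  rw [jIdeal_eq_span_pair, Derivation.leibniz, Derivation.leibniz,
    pderiv_zero_X_pow_char_add_X_pow_char_sub_one (by omega),
    pderiv_one_X_pow_char_add_X_pow_char_sub_one (by omega)]
  simp only [smul_eq_mul, mul_zero, map_add, Derivation.map_one_eq_zero,
    MvPowerSeries.pderiv_X_self, zero_add, mul_one, mul_neg, add_zero, Ideal.span_pair_neg,
    MvPowerSeries.pderiv_X_of_ne (show (0 : Fin 2) ≠ 1 by decide)]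
  obtain ⟨k, rfl⟩ : ∃ k, p = k + 2 := ⟨p - 2, by omega⟩
  rw [Ideal.span_insert, Ideal.span_singleton_mul_left_unit (isUnit_one_add_X 0),
    ← Ideal.span_insert, show k + 2 - 1 = k + 1 by omega, Nat.add_sub_cancel,
    pow_succ' (X 1 : MvPowerSeries (Fin 2) K) k, Ideal.span_pair_add_mul_right]

end CharP

end

theorem stmt_3_general {K : Type*} [Field K] (p : ℕ) [CharP K p] (h3 : 3 ≤ p)
    (f g : MvPowerSeries (Fin 2) K) (hf : f = X 0 ^ p + X 1 ^ (p - 1))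
    (hg : g = (1 + X 0) * f) :
    ContactEquiv f g ∧
    FiniteDimensional K (MvPowerSeries (Fin 2) K ⧸ jIdeal g) ∧
    Module.finrank K (MvPowerSeries (Fin 2) K ⧸ jIdeal g) = p * (p - 2) ∧
    ¬ FiniteDimensional K (MvPowerSeries (Fin 2) K ⧸ jIdeal f) := by
  subst hf hg
  rw [jIdeal_one_add_X_mul_X_pow_char_add_X_pow_char_sub_one (by omega),
    jIdeal_X_pow_char_add_X_pow_char_sub_one (by omega)]
  refine ⟨contactEquiv_mul_left_of_isUnit (isUnit_one_add_X 0) _,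
    Module.Finite.equiv (quotientSpanXPowEquiv p (p - 2)).symm,
    finrank_quotient_span_X_pow p (p - 2),
    not_finiteDimensional_quotient_of_le_span_X (i := 0) (j := 1) (by decide) ?_⟩
  exact Ideal.span_singleton_le_span_singleton.mpr (dvd_pow_self _ (by omega))

/-- For `f = xᵖ + y^(p-1)` and `g = (1+x)·f` in characteristic `p ≥ 3`: `f` and `g`
are contact equivalent, `μ(g) = p(p-2)` is finite, while `μ(f)` is infinite. -/
theorem stmt_3 {K : Type*} [Field K] (p : ℕ) [CharP K p] (hp : p.Prime) (h3 : 3 ≤ p)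
    (f g : MvPowerSeries (Fin 2) K) (hf : f = X 0 ^ p + X 1 ^ (p - 1))
    (hg : g = (1 + X 0) * f) :
    ContactEquiv f g ∧
    FiniteDimensional K (MvPowerSeries (Fin 2) K ⧸ jIdeal g) ∧
    Module.finrank K (MvPowerSeries (Fin 2) K ⧸ jIdeal g) = p * (p - 2) ∧
    ¬ FiniteDimensional K (MvPowerSeries (Fin 2) K ⧸ jIdeal f) :=
  stmt_3_general p h3 f g hf hg
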